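/- arXiv:2202.12293 — 3 statements merged into one kernel-verified Lean document; each statement's English description precedes it below -/
import Mathlib

section
/- For any minor-closed class Π of graphs and any k ∈ ℕ, the class Π_k of graphs from which a graph in Π can be obtained by at most k vertex splits is also minor closed. -/
/-- `H` is a minor of `G`, expressed via branch sets. -/
def GraphMinor {W V : Type} (H : SimpleGraph W) (G : SimpleGraph V) : Prop :=
  ∃ φ : W → Set V,
    (∀ w, (φ w).Nonempty) ∧
    (∀ w, (G.induce (φ w)).Connected) ∧
    (∀ w w', w ≠ w' → Disjoint (φ w) (φ w')) ∧
    (∀ w w', H.Adj w w' → ∃ a ∈ φ w, ∃ b ∈ φ w', G.Adj a b)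

/-- The result of splitting vertex `v` of `G` into two copies with
neighborhoods `N1` and `N2`. -/
def doSplit {V : Type} (G : SimpleGraph V) (v : V) (N1 N2 : Set V) :
    SimpleGraph ({u : V // u ≠ v} ⊕ Fin 2) :=
  SimpleGraph.fromRel fun a b =>
    match a, b with
    | Sum.inl u, Sum.inl w => G.Adj u.1 w.1
    | Sum.inl u, Sum.inr i => (i = 0 ∧ u.1 ∈ N1) ∨ (i = 1 ∧ u.1 ∈ N2)
    | _, _ => False

/-- `SplitsTo G k H` holds when `H` can be obtained from `G` by exactly `k`
vertex splits (up to isomorphism at every step). -/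
inductive SplitsTo : SimpleGraph ℕ → ℕ → SimpleGraph ℕ → Prop
  | refl (G : SimpleGraph ℕ) : SplitsTo G 0 G
  | step {G H K : SimpleGraph ℕ} {k : ℕ} (v : ℕ) (N1 N2 : Set ℕ)
      (hcov : N1 ∪ N2 = G.neighborSet v)
      (hiso : Nonempty (H ≃g doSplit G v N1 N2))
      (htail : SplitsTo H k K) : SplitsTo G (k + 1) K

/-- The class `Π_k` of graphs from which a member of `Cls` can be obtained by
at most `k` vertex splits. -/
def PiK (Cls : Set (SimpleGraph ℕ)) (k : ℕ) : Set (SimpleGraph ℕ) :=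
  {G | ∃ j ≤ k, ∃ H ∈ Cls, SplitsTo G j H}

def MinorClosed (P : Set (SimpleGraph ℕ)) : Prop :=
  ∀ G ∈ P, ∀ H : SimpleGraph ℕ, GraphMinor H G → H ∈ P

/-!
A minor survives a vertex split, at the cost of at most one split of the minor itself. If `H` is
a minor of `G` and `G'` arises from `G` by splitting `v`, pull the branch sets of `H` back along
the map `G' → G` that merges the two copies of `v`. Every pulled-back branch set stays connected
except possibly the one containing `v`, and that one falls into at most two connected pieces,
each containing a copy of `v`. In the first case `H` is a minor of `G'`; in the second,
splitting the corresponding vertex of `H` between the two pieces gives a minor of `G'`. By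
induction on the number of splits, every minor of a graph in `Π_k` splits in at most `k` steps
into a minor of a graph in `Π`.
-/

open SimpleGraph Function

section Reachability

variable {V : Type} {G : SimpleGraph V} {s : Set V} {a b c : V}

-- Reachability inside `s`, phrased on `V` itself so that no subtype bookkeeping is needed.
def ReachIn (G : SimpleGraph V) (s : Set V) (a b : V) : Prop :=
  a ∈ s ∧ Relation.ReflTransGen (fun x y => G.Adj x y ∧ x ∈ s ∧ y ∈ s) a b

namespace ReachIn

lemma refl (ha : a ∈ s) : ReachIn G s a a := ⟨ha, .refl⟩

lemma mem_right (h : ReachIn G s a b) : b ∈ s := by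
  rcases h.2.cases_tail with rfl | ⟨_, -, -, -, hb⟩
  exacts [h.1, hb]

lemma trans (hab : ReachIn G s a b) (hbc : ReachIn G s b c) : ReachIn G s a c :=
  ⟨hab.1, hab.2.trans hbc.2⟩

lemma symm (h : ReachIn G s a b) : ReachIn G s b a :=
  ⟨h.mem_right, Relation.ReflTransGen.mono (fun _ _ h => ⟨h.1.symm, h.2.2, h.2.1⟩) _ _
    (Relation.ReflTransGen.swap _ _ h.2)⟩

lemma head (hab : G.Adj a b) (ha : a ∈ s) (h : ReachIn G s b c) : ReachIn G s a c :=
  ⟨ha, .head ⟨hab, ha, h.1⟩ h.2⟩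

lemma reachable (h : ReachIn G s a b) :
    (G.induce s).Reachable ⟨a, h.1⟩ ⟨b, h.mem_right⟩ := by
  suffices ∀ hb : b ∈ s, (G.induce s).Reachable ⟨a, h.1⟩ ⟨b, hb⟩ from this _
  obtain ⟨ha, h⟩ := h
  induction h using Relation.ReflTransGen.head_induction_on with
  | refl => exact fun _ => .rfl
  | head hac _ ih =>
    exact fun hb =>
      (show (G.induce s).Adj ⟨_, ha⟩ ⟨_, hac.2.2⟩ from hac.1).reachable.trans (ih hac.2.2 hb)

lemma setOf_reachIn (h : ReachIn G s a b) : ReachIn G {x | ReachIn G s x b} a b := by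
  obtain ⟨ha, h⟩ := h
  induction h using Relation.ReflTransGen.head_induction_on with
  | refl => exact .refl (.refl ha)
  | head hac hcb ih => exact .head hac.1 ⟨ha, .head hac hcb⟩ (ih hac.2.2)

end ReachIn

lemma SimpleGraph.Connected.reachIn (h : (G.induce s).Connected) (ha : a ∈ s) (hb : b ∈ s) :
    ReachIn G s a b :=
  ⟨ha, ((reachable_iff_reflTransGen _ _).1 (h.preconnected ⟨a, ha⟩ ⟨b, hb⟩)).lift Subtype.val
    fun x y hxy => ⟨hxy, x.2, y.2⟩⟩

lemma connected_induce_of_forall_reachIn (ha : a ∈ s) (h : ∀ x ∈ s, ReachIn G s a x) :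
    (G.induce s).Connected :=
  (connected_iff_exists_forall_reachable _).2 ⟨⟨a, ha⟩, fun x => (h x x.2).reachable⟩

lemma exists_connected_partition_of_reachIn (ha : a ∈ s) (hb : b ∈ s)
    (hreach : ∀ x ∈ s, ReachIn G s x a ∨ ReachIn G s x b) (hs : ¬(G.induce s).Connected) :
    ∃ C : Fin 2 → Set V, (∀ i, (C i).Nonempty ∧ (G.induce (C i)).Connected) ∧
      Disjoint (C 0) (C 1) ∧ C 0 ∪ C 1 = s := by
  have hab : ¬ReachIn G s a b := fun hab => hs <| connected_induce_of_forall_reachIn ha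
    fun x hx => (hreach x hx).elim ReachIn.symm fun hxb => hab.trans hxb.symm
  refine ⟨![{x | ReachIn G s x a}, {x | ReachIn G s x b}], ?_, ?_, ?_⟩
  · have basin : ∀ {c}, c ∈ s → ({x | ReachIn G s x c}.Nonempty ∧
        (G.induce {x | ReachIn G s x c}).Connected) := fun hc =>
      ⟨⟨_, .refl hc⟩, connected_induce_of_forall_reachIn (.refl hc)
        fun _ hx => hx.setOf_reachIn.symm⟩
    exact Fin.forall_fin_two.2 ⟨basin ha, basin hb⟩
  · exact Set.disjoint_left.2 fun x hxa hxb => hab (hxa.symm.trans hxb)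
  · ext x
    exact ⟨fun hx => hx.elim And.left And.left, hreach x⟩

end Reachability

section Split

variable {V : Type} {G : SimpleGraph V} {v : V} {N1 N2 : Set V}

@[simp] lemma doSplit_adj_inl_inl {a b : {u : V // u ≠ v}} :
    (doSplit G v N1 N2).Adj (Sum.inl a) (Sum.inl b) ↔ G.Adj a b := by
  simp only [doSplit, SimpleGraph.fromRel_adj, ne_eq, Sum.inl.injEq, G.adj_comm b.1, or_self]
  exact ⟨And.right, fun h => ⟨fun hab => h.ne (congrArg Subtype.val hab), h⟩⟩

@[simp] lemma doSplit_adj_inl_inr {a : {u : V // u ≠ v}} {i : Fin 2} :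
    (doSplit G v N1 N2).Adj (Sum.inl a) (Sum.inr i) ↔
      (i = 0 ∧ a.1 ∈ N1) ∨ (i = 1 ∧ a.1 ∈ N2) := by
  simp [doSplit]

@[simp] lemma doSplit_not_adj_inr {i j : Fin 2} :
    ¬(doSplit G v N1 N2).Adj (Sum.inr i) (Sum.inr j) := by
  simp [doSplit]

def splitProj (v : V) : {u : V // u ≠ v} ⊕ Fin 2 → V :=
  Sum.elim Subtype.val fun _ => v

lemma splitProj_surjective : Surjective (splitProj v) := by
  intro a
  by_cases h : a = v
  exacts [⟨Sum.inr 0, h.symm⟩, ⟨Sum.inl ⟨a, h⟩, rfl⟩]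

lemma exists_doSplit_adj_inr (hcov : N1 ∪ N2 = G.neighborSet v) {a : V} (ha : G.Adj a v) :
    ∃ i, (doSplit G v N1 N2).Adj (Sum.inl ⟨a, ha.ne⟩) (Sum.inr i) := by
  have : a ∈ N1 ∪ N2 := hcov ▸ ha.symm
  rcases this with h | h
  exacts [⟨0, by simp [h]⟩, ⟨1, by simp [h]⟩]

lemma exists_doSplit_adj_of_adj (hcov : N1 ∪ N2 = G.neighborSet v) {a b : V} (hab : G.Adj a b) :
    ∃ x y, splitProj v x = a ∧ splitProj v y = b ∧ (doSplit G v N1 N2).Adj x y := by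
  by_cases ha : a = v
  · subst ha
    obtain ⟨i, hi⟩ := exists_doSplit_adj_inr hcov hab.symm
    exact ⟨_, _, rfl, rfl, hi.symm⟩
  by_cases hb : b = v
  · subst hb
    obtain ⟨i, hi⟩ := exists_doSplit_adj_inr hcov hab
    exact ⟨_, _, rfl, rfl, hi⟩
  exact ⟨Sum.inl ⟨a, ha⟩, Sum.inl ⟨b, hb⟩, rfl, rfl, doSplit_adj_inl_inl.2 hab⟩

lemma connected_induce_preimage_splitProj {A : Set V} (hA : v ∉ A)
    (h : (G.induce A).Connected) :
    ((doSplit G v N1 N2).induce (splitProj v ⁻¹' A)).Connected := by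
  let f : G.induce A →g (doSplit G v N1 N2).induce (splitProj v ⁻¹' A) :=
    ⟨fun x => ⟨Sum.inl ⟨x, fun hx => hA (hx ▸ x.2)⟩, x.2⟩,
      fun hxy => (doSplit_adj_inl_inl (N1 := N1) (N2 := N2)).2 hxy⟩
  refine h.map f ?_
  rintro ⟨u | i, hx⟩
  exacts [⟨⟨u, hx⟩, rfl⟩, absurd hx hA]

lemma reachIn_inr_of_mem_preimage_splitProj (hcov : N1 ∪ N2 = G.neighborSet v) {A : Set V}
    (hvA : v ∈ A) (h : (G.induce A).Connected) {x} (hx : x ∈ splitProj v ⁻¹' A) :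
    ReachIn (doSplit G v N1 N2) (splitProj v ⁻¹' A) x (Sum.inr 0) ∨
      ReachIn (doSplit G v N1 N2) (splitProj v ⁻¹' A) x (Sum.inr 1) := by
  rcases x with ⟨a, hav⟩ | i
  swap
  · fin_cases i
    exacts [.inl (.refl hx), .inr (.refl hx)]
  have ha : a ∈ A := hx
  have hpath := (h.reachIn ha hvA).2
  clear hx
  induction hpath using Relation.ReflTransGen.head_induction_on with
  | refl => exact absurd rfl hav
  | @head a c hac _ ih =>
    have haT : Sum.inl ⟨a, hav⟩ ∈ splitProj v ⁻¹' A := ha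
    by_cases hcv : c = v
    · obtain ⟨i, hi⟩ := exists_doSplit_adj_inr hcov (hcv ▸ hac.1)
      fin_cases i
      exacts [.inl (.head hi haT (.refl hvA)), .inr (.head hi haT (.refl hvA))]
    · exact (ih hcv hac.2.2).imp (.head (doSplit_adj_inl_inl.2 hac.1) haT)
        (.head (doSplit_adj_inl_inl.2 hac.1) haT)

end Split

section PreModel

variable {W V V' : Type} {H : SimpleGraph W} {G : SimpleGraph V} {G' : SimpleGraph V'}
  {φ : W → Set V}

-- A minor model minus the connectivity condition, the only one that a split can break.
structure IsPreModel (H : SimpleGraph W) (G : SimpleGraph V) (φ : W → Set V) : Prop where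
  nonempty : ∀ w, (φ w).Nonempty
  disjoint : ∀ w w', w ≠ w' → Disjoint (φ w) (φ w')
  exists_adj : ∀ w w', H.Adj w w' → ∃ a ∈ φ w, ∃ b ∈ φ w', G.Adj a b

lemma graphMinor_iff :
    GraphMinor H G ↔ ∃ φ, IsPreModel H G φ ∧ ∀ w, (G.induce (φ w)).Connected :=
  ⟨fun ⟨φ, hne, hconn, hdisj, hadj⟩ => ⟨φ, ⟨hne, hdisj, hadj⟩, hconn⟩,
    fun ⟨φ, ⟨hne, hdisj, hadj⟩, hconn⟩ => ⟨φ, hne, hconn, hdisj, hadj⟩⟩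

lemma IsPreModel.preimage {f : V' → V} (hf : Surjective f)
    (hlift : ∀ a b, G.Adj a b → ∃ x y, f x = a ∧ f y = b ∧ G'.Adj x y)
    (hφ : IsPreModel H G φ) : IsPreModel H G' fun w => f ⁻¹' φ w where
  nonempty w := (hφ.nonempty w).preimage hf
  disjoint w w' h := (hφ.disjoint w w' h).preimage f
  exists_adj w w' h := by
    obtain ⟨a, ha, b, hb, hab⟩ := hφ.exists_adj w w' h
    obtain ⟨x, y, rfl, rfl, hxy⟩ := hlift a b hab
    exact ⟨x, ha, y, hb, hxy⟩

lemma IsPreModel.exists_doSplit (hφ : IsPreModel H G φ) {w₀ : W} {C : Fin 2 → Set V}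
    (hC : ∀ i, (C i).Nonempty) (hC01 : Disjoint (C 0) (C 1)) (hCφ : C 0 ∪ C 1 = φ w₀) :
    ∃ M₁ M₂, M₁ ∪ M₂ = H.neighborSet w₀ ∧
      IsPreModel (doSplit H w₀ M₁ M₂) G (Sum.elim (fun u => φ u.1) C) := by
  let M : Fin 2 → Set W := fun i => {w | H.Adj w₀ w ∧ ∃ a ∈ φ w, ∃ b ∈ C i, G.Adj a b}
  have hCsub : ∀ i, C i ⊆ φ w₀ := by
    rw [Fin.forall_fin_two, ← hCφ]
    exact ⟨Set.subset_union_left, Set.subset_union_right⟩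
  have hM : ∀ (u : {w // w ≠ w₀}) i, (doSplit H w₀ (M 0) (M 1)).Adj (Sum.inl u) (Sum.inr i) →
      ∃ a ∈ φ u, ∃ b ∈ C i, G.Adj a b := by
    intro u i h
    rcases doSplit_adj_inl_inr.1 h with ⟨rfl, hu⟩ | ⟨rfl, hu⟩
    exacts [hu.2, hu.2]
  refine ⟨M 0, M 1, ?_, ⟨?_, ?_, ?_⟩⟩
  · ext w
    refine ⟨fun h => h.elim And.left And.left, fun h => ?_⟩
    obtain ⟨a, ha, b, hb, hab⟩ := hφ.exists_adj w w₀ h.symm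
    rw [← hCφ] at hb
    exact hb.imp (fun hb => ⟨h, a, ha, b, hb, hab⟩) (fun hb => ⟨h, a, ha, b, hb, hab⟩)
  · rintro (u | i)
    exacts [hφ.nonempty u, hC i]
  · rintro (u | i) (u' | i') h
    · exact hφ.disjoint u u' fun e => h (congrArg _ (Subtype.ext e))
    · exact (hφ.disjoint u w₀ u.2).mono_right (hCsub i')
    · exact (hφ.disjoint w₀ u' (Ne.symm u'.2)).mono_left (hCsub i)
    · fin_cases i <;> fin_cases i'
      exacts [absurd rfl h, hC01, hC01.symm, absurd rfl h]
  · rintro (u | i) (u' | i') h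
    · exact hφ.exists_adj u u' (doSplit_adj_inl_inl.1 h)
    · exact hM u i' h
    · obtain ⟨a, ha, b, hb, hab⟩ := hM u' i h.symm
      exact ⟨b, hb, a, ha, hab.symm⟩
    · exact absurd h doSplit_not_adj_inr

lemma GraphMinor.congr_left {W' : Type} {H' : SimpleGraph W'} (e : H ≃g H')
    (h : GraphMinor H G) : GraphMinor H' G := by
  obtain ⟨φ, hne, hconn, hdisj, hadj⟩ := h
  exact ⟨fun w => φ (e.symm w), fun w => hne _, fun w => hconn _,
    fun w w' hww' => hdisj _ _ (e.symm.injective.ne hww'),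
    fun w w' hadj' => hadj _ _ (e.symm.map_rel_iff.2 hadj')⟩

lemma GraphMinor.congr_right (e : G ≃g G') (h : GraphMinor H G) : GraphMinor H G' := by
  obtain ⟨φ, hne, hconn, hdisj, hadj⟩ := h
  refine ⟨fun w => e '' φ w, fun w => (hne w).image e, fun w => ?_,
    fun w w' hww' => (Set.disjoint_image_iff e.injective).2 (hdisj w w' hww'), fun w w' h => ?_⟩
  · refine (hconn w).map (induceHom e.toHom (Set.mapsTo_image e (φ w))) ?_
    rintro ⟨_, a, ha, rfl⟩
    exact ⟨⟨a, ha⟩, rfl⟩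
  · obtain ⟨a, ha, b, hb, hab⟩ := hadj w w' h
    exact ⟨e a, ⟨a, ha, rfl⟩, e b, ⟨b, hb, rfl⟩, e.map_rel_iff.2 hab⟩

end PreModel

theorem GraphMinor.doSplit_or_exists_doSplit {W V : Type} {H : SimpleGraph W} {G : SimpleGraph V}
    {v : V} {N1 N2 : Set V} (hcov : N1 ∪ N2 = G.neighborSet v) (hm : GraphMinor H G) :
    GraphMinor H (doSplit G v N1 N2) ∨ ∃ w₀ M₁ M₂, M₁ ∪ M₂ = H.neighborSet w₀ ∧
      GraphMinor (doSplit H w₀ M₁ M₂) (doSplit G v N1 N2) := by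
  obtain ⟨φ, hφ, hconn⟩ := graphMinor_iff.1 hm
  set G' := doSplit G v N1 N2
  set ψ := fun w => splitProj v ⁻¹' φ w
  have hψ : IsPreModel H G' ψ :=
    hφ.preimage splitProj_surjective fun _ _ => exists_doSplit_adj_of_adj hcov
  by_cases hψconn : ∀ w, (G'.induce (ψ w)).Connected
  · exact .inl (graphMinor_iff.2 ⟨ψ, hψ, hψconn⟩)
  obtain ⟨w₀, hw₀⟩ := not_forall.1 hψconn
  have hv : v ∈ φ w₀ := by_contra fun hv => hw₀ (connected_induce_preimage_splitProj hv (hconn w₀))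
  have hψconn' : ∀ w, w ≠ w₀ → (G'.induce (ψ w)).Connected := fun w hw =>
    connected_induce_preimage_splitProj (Set.disjoint_right.1 (hφ.disjoint w w₀ hw) hv) (hconn w)
  obtain ⟨C, hC, hC01, hCψ⟩ := exists_connected_partition_of_reachIn (a := Sum.inr 0)
    (b := Sum.inr 1) hv hv (fun _ => reachIn_inr_of_mem_preimage_splitProj hcov hv (hconn w₀)) hw₀
  obtain ⟨M₁, M₂, hM, hpre⟩ := hψ.exists_doSplit (fun i => (hC i).1) hC01 hCψ
  refine .inr ⟨w₀, M₁, M₂, hM, graphMinor_iff.2 ⟨_, hpre, ?_⟩⟩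
  rintro (u | i)
  exacts [hψconn' u u.2, (hC i).2]

lemma SimpleGraph.exists_iso_nat {W : Type} [Countable W] [Infinite W] (H : SimpleGraph W) :
    ∃ H' : SimpleGraph ℕ, Nonempty (H' ≃g H) := by
  obtain ⟨e⟩ := nonempty_equiv_of_countable (α := W) (β := ℕ)
  exact ⟨_, ⟨(Iso.map e H).symm⟩⟩

theorem SplitsTo.exists_splitsTo_of_graphMinor {G K L : SimpleGraph ℕ} {j : ℕ}
    (hs : SplitsTo G j K) (hL : GraphMinor L G) :
    ∃ j' ≤ j, ∃ K', GraphMinor K' K ∧ SplitsTo L j' K' := by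
  induction hs generalizing L with
  | refl G => exact ⟨0, le_rfl, L, hL, .refl L⟩
  | @step _ _ _ k v N1 N2 hcov hiso _ ih =>
    obtain ⟨e⟩ := hiso
    rcases hL.doSplit_or_exists_doSplit hcov with h | ⟨w₀, M₁, M₂, hM, h⟩
    · obtain ⟨j', hj', K', hK', hsp⟩ := ih (h.congr_right e.symm)
      exact ⟨j', hj'.trans k.le_succ, K', hK', hsp⟩
    · have : Infinite {u : ℕ // u ≠ w₀} := (Set.finite_singleton w₀).infinite_compl.to_subtype
      obtain ⟨L', ⟨eL⟩⟩ := (doSplit L w₀ M₁ M₂).exists_iso_nat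
      obtain ⟨j', hj', K', hK', hsp⟩ := ih ((h.congr_left eL.symm).congr_right e.symm)
      exact ⟨j' + 1, Nat.succ_le_succ hj', K', hK', .step w₀ M₁ M₂ hM ⟨eL⟩ hsp⟩

/-- For a minor-closed graph class `Cls` and `k ∈ ℕ`, the class `Cls_k` is
minor closed. -/
theorem stmt0 (Cls : Set (SimpleGraph ℕ)) (k : ℕ) (hCls : MinorClosed Cls) :
    MinorClosed (PiK Cls k) := by
  rintro G ⟨j, hj, K, hK, hs⟩ H hm
  obtain ⟨j', hj', K', hK', hsp⟩ := hs.exists_splitsTo_of_graphMinor hm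
  exact ⟨j', hj'.trans hj, K', hCls K hK K' hK', hsp⟩
end

section
/- If G ∈ Π_k and G' is a subgraph of G, then G' ∈ Π_k, whenever Π is a class of graphs closed under taking subgraphs. -/
def SubgraphClosed (P : Set (SimpleGraph ℕ)) : Prop :=
  ∀ G ∈ P, ∀ H : SimpleGraph ℕ, H ≤ G → H ∈ P

def splitRel {V : Type} (G : SimpleGraph V) (v : V) (N1 N2 : Set V) :
    ({u : V // u ≠ v} ⊕ Fin 2) → ({u : V // u ≠ v} ⊕ Fin 2) → Prop
  | Sum.inl u, Sum.inl w => G.Adj u.1 w.1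
  | Sum.inl u, Sum.inr i => (i = 0 ∧ u.1 ∈ N1) ∨ (i = 1 ∧ u.1 ∈ N2)
  | _, _ => False

lemma doSplit_eq {V : Type} (G : SimpleGraph V) (v : V) (N1 N2 : Set V) :
    doSplit G v N1 N2 = SimpleGraph.fromRel (splitRel G v N1 N2) := by
  rfl

lemma rel_mono {V : Type} {G G' : SimpleGraph V} (v : V) {N1 N2 N1' N2' : Set V}
    (hG : G' ≤ G) (h1 : N1' ⊆ N1) (h2 : N2' ⊆ N2)
    (a b : {u : V // u ≠ v} ⊕ Fin 2)
    (h : splitRel G' v N1' N2' a b) : splitRel G v N1 N2 a b := by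
  match a, b with
  | Sum.inl u, Sum.inl w => exact hG h
  | Sum.inl u, Sum.inr i =>
      rcases h with ⟨hi, hm⟩ | ⟨hi, hm⟩
      · exact Or.inl ⟨hi, h1 hm⟩
      · exact Or.inr ⟨hi, h2 hm⟩
  | Sum.inr i, Sum.inl u => exact h.elim
  | Sum.inr i, Sum.inr j => exact h.elim

lemma doSplit_mono {V : Type} {G G' : SimpleGraph V} (v : V) {N1 N2 N1' N2' : Set V}
    (hG : G' ≤ G) (h1 : N1' ⊆ N1) (h2 : N2' ⊆ N2) :
    doSplit G' v N1' N2' ≤ doSplit G v N1 N2 := by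
  rw [doSplit_eq, doSplit_eq]
  intro a b hab
  obtain ⟨hne, h⟩ := hab
  exact ⟨hne, h.imp (rel_mono v hG h1 h2 a b) (rel_mono v hG h1 h2 b a)⟩

lemma splitsTo_mono {G : SimpleGraph ℕ} {j : ℕ} {H : SimpleGraph ℕ}
    (hs : SplitsTo G j H) :
    ∀ G' : SimpleGraph ℕ, G' ≤ G → ∃ H' ≤ H, SplitsTo G' j H' := by
  induction hs with
  | refl G => exact fun G' h => ⟨G', h, SplitsTo.refl G'⟩
  | step v N1 N2 hcov hiso htail ih =>
      rename_i G H K k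
      intro G' hsub
      obtain ⟨e⟩ := hiso
      set N1' := N1 ∩ G'.neighborSet v with hN1'
      set N2' := N2 ∩ G'.neighborSet v with hN2'
      have hcov' : N1' ∪ N2' = G'.neighborSet v := by
        rw [hN1', hN2', ← Set.union_inter_distrib_right, hcov]
        exact Set.inter_eq_right.mpr fun u hu => hsub hu
      have hle : doSplit G' v N1' N2' ≤ doSplit G v N1 N2 :=
        doSplit_mono v hsub Set.inter_subset_left Set.inter_subset_left
      set H' : SimpleGraph ℕ := (doSplit G' v N1' N2').comap e with hH'
      have hH'le : H' ≤ H := by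
        intro a b hab
        have : (doSplit G v N1 N2).Adj (e a) (e b) := hle hab
        exact e.map_adj_iff.mp this
      have hiso' : H' ≃g doSplit G' v N1' N2' :=
        ⟨e.toEquiv, Iff.rfl⟩
      obtain ⟨K', hK'le, hK's⟩ := ih H' hH'le
      exact ⟨K', hK'le, SplitsTo.step v N1' N2' hcov' ⟨hiso'⟩ hK's⟩

/-- If `G ∈ Π_k` and `G'` is a subgraph of `G`, then `G' ∈ Π_k`, whenever the
class `Cls` is closed under taking subgraphs. -/
theorem stmt1 (Cls : Set (SimpleGraph ℕ)) (k : ℕ) (hCls : SubgraphClosed Cls)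
    (G G' : SimpleGraph ℕ) (hG : G ∈ PiK Cls k) (hsub : G' ≤ G) :
    G' ∈ PiK Cls k := by
  obtain ⟨j, hj, H, hH, hs⟩ := hG
  obtain ⟨H', hH'le, hs'⟩ := splitsTo_mono hs G' hsub
  exact ⟨j, hj, H', hCls H hH H' hH'le, hs'⟩
end

section
/- If six faces f1,…,f6 with the same label u̇ occur in this order along a shortest face path P, and each of f1 and f6 has face-path distance at most 2 from the face f_u̇ containing u̇, then P is not shortest (a shortcut of length ≤ 4 connects f1 to f6). -/
/-!
Every stretch of a shortest walk is itself a shortest walk, so two faces `j - i > 4` steps apart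
on `P` are at distance `j - i > 4`. But going through `f_u̇` shows that `f₁` and `f₆` are at
distance at most `2 + 2 = 4`.
-/

namespace SimpleGraph.Walk

variable {V : Type*} {G : SimpleGraph V} {u v : V}

lemma dist_getVert_of_length_eq_dist (p : G.Walk u v) (hp : p.length = G.dist u v)
    {i j : ℕ} (hij : i ≤ j) (hj : j ≤ p.length) :
    G.dist (p.getVert i) (p.getVert j) = j - i := by
  have hsub : ((p.drop i).take (j - i)).IsSubwalk p :=
    (isSubwalk_take _ _).trans (isSubwalk_drop _ _)
  have hlen := length_eq_dist_of_subwalk hp hsub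
  rw [take_length, drop_length, drop_getVert, Nat.add_sub_cancel' hij] at hlen
  omega

end SimpleGraph.Walk

open SimpleGraph

theorem stmt13_general {F : Type} (D : SimpleGraph F) (a b fu f1 f6 : F)
    (P : D.Walk a b) (hshort : P.length = D.dist a b)
    (i j : ℕ) (hij : i + 4 < j) (hjlen : j < P.support.length)
    (h1 : P.support[i]? = some f1) (h6 : P.support[j]? = some f6)
    (hr1 : D.Reachable f1 fu)
    (hd1 : D.dist f1 fu ≤ 2) (hd6 : D.dist fu f6 ≤ 2) :
    False := by
  have hj : j ≤ P.length := by rw [P.length_support] at hjlen; omega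
  have hf1 : P.getVert i = f1 := by
    simpa [← P.getVert_eq_support_getElem? (by omega : i ≤ P.length)] using h1
  have hf6 : P.getVert j = f6 := by
    simpa [← P.getVert_eq_support_getElem? hj] using h6
  have hfar : D.dist f1 f6 = j - i := by
    rw [← hf1, ← hf6, P.dist_getVert_of_length_eq_dist hshort (by omega) hj]
  have hnear : D.dist f1 f6 ≤ 4 :=
    (hr1.dist_triangle_left f6).trans (by omega)
  omega

/-- If two faces `f₁` and `f₆` (carrying the same label `u̇`, hence both within
face-path distance 2 — dual distance 2 each — of the face `f_u̇` in which `u̇`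
is embedded) occur on a shortest face path `P` (a walk in the modified dual
graph `D` whose length equals the distance between its endpoints) at positions
more than 4 apart, then we obtain a contradiction: the shortcut of length at
most 4 through `f_u̇` shows that `P` is not shortest. -/
theorem stmt13 {F : Type} (D : SimpleGraph F) (a b fu f1 f6 : F)
    (P : D.Walk a b) (hshort : P.length = D.dist a b)
    (i j : ℕ) (hij : i + 4 < j) (hjlen : j < P.support.length)
    (h1 : P.support[i]? = some f1) (h6 : P.support[j]? = some f6)
    (hr1 : D.Reachable f1 fu) (hr6 : D.Reachable fu f6)
    (hd1 : D.dist f1 fu ≤ 2) (hd6 : D.dist fu f6 ≤ 2) :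
    False :=
  stmt13_general D a b fu f1 f6 P hshort i j hij hjlen h1 h6 hr1 hd1 hd6
end
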